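/- Let m > 0, λ ≥ 0, and let f : ℝ^d → ℝ be m-strongly convex. Fix s, ζ ∈ ℝ^d. Let ŷ be a global minimizer of y ↦ f(y) + (λ/2)‖y − s‖², and let y′ be a global minimizer of y ↦ f(y + ζ) + (λ/2)‖y − s‖². Then ‖y′ − ŷ‖ ≤ 2‖ζ‖. -/

import Mathlib

/-! The minimizers `ŷ` and `y' + ζ` minimize `f + (λ/2)‖· - c‖²` for the centres `c = s` and
`c = s + ζ`, and these objectives are `(m + λ)`-strongly convex. Strong convexity gives quadratic
growth away from each minimizer; adding the two growth inequalities, the `f`-terms cancel and the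
quadratic terms leave `(m + λ)‖y' + ζ - ŷ‖² ≤ λ⟪y' + ζ - ŷ, ζ⟫`, so `‖y' + ζ - ŷ‖ ≤ ‖ζ‖`. -/

open Set Filter Topology RealInnerProductSpace

section StrongConvexity

variable {E : Type*} [NormedAddCommGroup E] [InnerProductSpace ℝ E] {s : Set E}

lemma strongConvexOn_sq_norm_sub (hs : Convex ℝ s) (lam : ℝ) (c : E) :
    StrongConvexOn s lam (fun x => lam / 2 * ‖x - c‖ ^ 2) := by
  refine strongConvexOn_iff_convex.2 ⟨hs, fun x _ y _ a b _ _ hab => le_of_eq ?_⟩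
  obtain rfl := eq_sub_of_add_eq hab
  simp only [smul_eq_mul, ← real_inner_self_eq_norm_sq, inner_sub_sub_self,
    inner_add_left, inner_add_right, real_inner_smul_left, real_inner_smul_right,
    real_inner_comm x y, real_inner_comm x c, real_inner_comm y c]
  ring

lemma StrongConvexOn.add_sq_norm_sub {f : E → ℝ} {m : ℝ} (hf : StrongConvexOn s m f)
    (lam : ℝ) (c : E) : StrongConvexOn s (m + lam) (fun x => f x + lam / 2 * ‖x - c‖ ^ 2) := by
  refine (hf.add (strongConvexOn_sq_norm_sub hf.1 lam c)).mono fun r => le_of_eq ?_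
  simp only [Pi.add_apply]
  ring

lemma StrongConvexOn.add_sq_norm_sub_le_of_isMinOn {g : E → ℝ} {m : ℝ}
    (hg : StrongConvexOn s m g) {a z : E} (ha : a ∈ s) (hz : z ∈ s) (hmin : IsMinOn g s a) :
    g a + m / 2 * ‖z - a‖ ^ 2 ≤ g z := by
  have hbound : ∀ t ∈ Ioo (0 : ℝ) 1, (1 - t) * (m / 2 * ‖z - a‖ ^ 2) ≤ g z - g a := by
    rintro t ⟨ht0, ht1⟩
    have hcomb := hg.2 ha hz (sub_nonneg.2 ht1.le) ht0.le (sub_add_cancel 1 t)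
    have hle := isMinOn_iff.1 hmin _ (hg.1 ha hz (sub_nonneg.2 ht1.le) ht0.le (sub_add_cancel 1 t))
    rw [norm_sub_rev] at hcomb
    simp only [smul_eq_mul] at hcomb
    refine le_of_mul_le_mul_left ?_ ht0
    nlinarith
  have hlim : Tendsto (fun t : ℝ => (1 - t) * (m / 2 * ‖z - a‖ ^ 2)) (𝓝[>] 0)
      (𝓝 (m / 2 * ‖z - a‖ ^ 2)) := by
    refine tendsto_nhdsWithin_of_tendsto_nhds ?_
    convert ((continuous_const.sub continuous_id).mul continuous_const).tendsto
      (f := fun t : ℝ => (1 - t) * (m / 2 * ‖z - a‖ ^ 2)) 0 using 2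
    simp
  have := le_of_tendsto hlim (eventually_of_mem (Ioo_mem_nhdsGT one_pos) hbound)
  linarith

lemma StrongConvexOn.mul_norm_sub_le_of_isMinOn_add_sq_norm_sub {f : E → ℝ} {m lam : ℝ}
    (hf : StrongConvexOn s m f) (hlam : 0 ≤ lam) {c c' a a' : E} (ha : a ∈ s) (ha' : a' ∈ s)
    (hmin : IsMinOn (fun x => f x + lam / 2 * ‖x - c‖ ^ 2) s a)
    (hmin' : IsMinOn (fun x => f x + lam / 2 * ‖x - c'‖ ^ 2) s a') :
    (m + lam) * ‖a' - a‖ ≤ lam * ‖c' - c‖ := by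
  have hgrowth := (hf.add_sq_norm_sub lam c).add_sq_norm_sub_le_of_isMinOn ha ha' hmin
  have hgrowth' := (hf.add_sq_norm_sub lam c').add_sq_norm_sub_le_of_isMinOn ha' ha hmin'
  have hcross : ‖a' - c‖ ^ 2 - ‖a - c‖ ^ 2 + (‖a - c'‖ ^ 2 - ‖a' - c'‖ ^ 2)
      = 2 * ⟪a' - a, c' - c⟫ := by
    simp only [← real_inner_self_eq_norm_sq, inner_sub_left, inner_sub_right,
      real_inner_comm a c, real_inner_comm a c', real_inner_comm a' c, real_inner_comm a' c']
    ring
  have hsq : (m + lam) * ‖a' - a‖ ^ 2 ≤ lam * (‖a' - a‖ * ‖c' - c‖) := by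
    rw [norm_sub_rev a a'] at hgrowth'
    nlinarith [real_inner_le_norm (a' - a) (c' - c)]
  rcases (norm_nonneg (a' - a)).eq_or_lt with hzero | hpos
  · rw [← hzero, mul_zero]
    positivity
  · nlinarith

end StrongConvexity

theorem stmt9 (d : ℕ) (m lam : ℝ) (hm : 0 < m) (hlam : 0 ≤ lam)
    (f : EuclideanSpace ℝ (Fin d) → ℝ)
    (hconv : ConvexOn ℝ Set.univ (fun x => f x - m / 2 * ‖x‖ ^ 2))
    (s ζ yhat y' : EuclideanSpace ℝ (Fin d))
    (hyhat : ∀ z, f yhat + lam / 2 * ‖yhat - s‖ ^ 2 ≤ f z + lam / 2 * ‖z - s‖ ^ 2)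
    (hy' : ∀ z, f (y' + ζ) + lam / 2 * ‖y' - s‖ ^ 2 ≤ f (z + ζ) + lam / 2 * ‖z - s‖ ^ 2) :
    ‖y' - yhat‖ ≤ 2 * ‖ζ‖ := by
  have hf : StrongConvexOn univ m f := strongConvexOn_iff_convex.2 hconv
  have hmin : IsMinOn (fun x => f x + lam / 2 * ‖x - s‖ ^ 2) univ yhat :=
    isMinOn_univ_iff.2 hyhat
  have hmin' : IsMinOn (fun x => f x + lam / 2 * ‖x - (s + ζ)‖ ^ 2) univ (y' + ζ) := by
    refine isMinOn_univ_iff.2 fun z => ?_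
    simpa [add_sub_add_right_eq_sub, sub_add_cancel, sub_sub, add_comm ζ s]
      using hy' (z - ζ)
  have hstable := hf.mul_norm_sub_le_of_isMinOn_add_sq_norm_sub hlam (mem_univ _)
    (mem_univ _) hmin hmin'
  rw [add_sub_cancel_left] at hstable
  have hshift : ‖y' + ζ - yhat‖ ≤ ‖ζ‖ := by nlinarith [norm_nonneg ζ]
  calc ‖y' - yhat‖ = ‖(y' + ζ - yhat) - ζ‖ := by rw [add_sub_right_comm, add_sub_cancel_right]
    _ ≤ ‖y' + ζ - yhat‖ + ‖ζ‖ := norm_sub_le _ _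
    _ ≤ 2 * ‖ζ‖ := by linarith
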